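/- Let α ∈ [0,1] and λ₀, λ₁ ∈ [1/2,1]. In ℂ², let |0⟩, |1⟩ be the standard basis, |+⟩ = (|0⟩+|1⟩)/√2, |−⟩ = (|0⟩−|1⟩)/√2. Define Kraus operators K⁰₀ = √λ₀|0⟩⟨0| + √(1−λ₀)|1⟩⟨1|, K⁰₁ = √(1−λ₀)|0⟩⟨0| + √λ₀|1⟩⟨1|, K¹₀ = √λ₁|+⟩⟨+| + √(1−λ₁)|−⟩⟨−|, K¹₁ = √(1−λ₁)|+⟩⟨+| + √λ₁|−⟩⟨−|, and Charlie's effects C⁰₀ = |0⟩⟨0|, C⁰₁ = |1⟩⟨1|, C¹₀ = |+⟩⟨+|, C¹₁ = |−⟩⟨−|. Then the maximum over all choices of qubit states ρ_x, x ∈ {0,1}², of P = (α/8)·Σ_{x,y} tr(K^y_{x_y} ρ_x (K^y_{x_y})†) + ((1−α)/16)·Σ_{x,y,z,b} tr(K^y_b ρ_x (K^y_b)† C^z_{x_z}) equals 1/2 + (1/4)·√((1−3α)²/2 + F(λ₀,λ₁)), where F(λ₀,λ₁) = (1−α)(1−3α)(√(λ₁(1−λ₁)) + √(λ₀(1−λ₀)))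 − (1+α)(1−3α)(λ₀² + λ₁²) + 4α(1−α)(√(λ₀(1−λ₀))·λ₁ + λ₀·√(λ₁(1−λ₁))) + (1−5α²)(λ₀ + λ₁). -/

import Mathlib

/-!
For each input `x = (x₀, x₁)` the score is linear in Alice's state: it equals
`tr (ρₓ Wₓ)` with `Wₓ = 𝟙/8 + (-1)^x₀ B σ_z + (-1)^x₁ C σ_x`, where `B` and `C` depend only on
`α` and the Kraus amplitudes `√λᵧ`, `√(1 - λᵧ)`. The `(σ_z, σ_x)`-part of the Bloch vector of a
qubit state lies in the unit disc (this is `det ρ ≥ 0`), so by Cauchy–Schwarz each score is at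
most `1/8 + √(B² + C²)`, with equality at the real pure state whose Bloch vector points along
`((-1)^x₀ B, (-1)^x₁ C)`. Summing over the four inputs gives `1/2 + 4 √(B² + C²)`, and
`256 (B² + C²) = (1 - 3α)²/2 + F(λ₀, λ₁)`.
-/

open Matrix
open scoped ComplexOrder

noncomputable section

abbrev Mat2 := Matrix (Fin 2) (Fin 2) ℂ

/-- A qubit state: a positive semidefinite 2×2 complex matrix with unit trace. -/
def IsQubitState (ρ : Mat2) : Prop := ρ.PosSemidef ∧ ρ.trace = 1

/-- The `y`-th bit of the pair `(x₀, x₁)`. -/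
def sel (x₀ x₁ y : Fin 2) : Fin 2 := if y = 0 then x₀ else x₁

/-- The rank-one projection (outer product) `|v⟩⟨v|`. -/
def proj (v : Fin 2 → ℂ) : Mat2 := vecMulVec v (star v)

def ket0 : Fin 2 → ℂ := ![1, 0]
def ket1 : Fin 2 → ℂ := ![0, 1]
def ketP : Fin 2 → ℂ := ![1 / (Real.sqrt 2 : ℂ), 1 / (Real.sqrt 2 : ℂ)]
def ketM : Fin 2 → ℂ := ![1 / (Real.sqrt 2 : ℂ), -(1 / (Real.sqrt 2 : ℂ))]

/-- The basis used by Bob's instrument `y` and Charlie's measurement `z`: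
the computational basis for index `0` and the `±` basis for index `1`. -/
def bas (y j : Fin 2) : Fin 2 → ℂ :=
  if y = 0 then (if j = 0 then ket0 else ket1) else (if j = 0 then ketP else ketM)

/-- Bob's Kraus operators with sharpness `l`:
`K^y_0 = √l |bas y 0⟩⟨bas y 0| + √(1−l) |bas y 1⟩⟨bas y 1|` and `K^y_1` with
`l` and `1−l` interchanged. -/
def Kg (l : ℝ) (y b : Fin 2) : Mat2 :=
  (Real.sqrt (if b = 0 then l else 1 - l) : ℂ) • proj (bas y 0) +
    (Real.sqrt (if b = 0 then 1 - l else l) : ℂ) • proj (bas y 1)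

/-- Charlie's measurement effects: `C⁰₀ = |0⟩⟨0|`, `C⁰₁ = |1⟩⟨1|`, `C¹₀ = |+⟩⟨+|`,
`C¹₁ = |−⟩⟨−|`. -/
def Cm (z c : Fin 2) : Mat2 := proj (bas z c)

/-- The function `F(λ₀,λ₁)` of Eq. (C2). -/
def Ffun (α l₀ l₁ : ℝ) : ℝ :=
  (1 - α) * (1 - 3 * α) * (Real.sqrt (l₁ * (1 - l₁)) + Real.sqrt (l₀ * (1 - l₀)))
    - (1 + α) * (1 - 3 * α) * (l₀ ^ 2 + l₁ ^ 2)
    + 4 * α * (1 - α) * (Real.sqrt (l₀ * (1 - l₀)) * l₁ + l₀ * Real.sqrt (l₁ * (1 - l₁)))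
    + (1 - 5 * α ^ 2) * (l₀ + l₁)

namespace PrepareTransformMeasure

open Finset Complex

/-- `blochZ ρ` and `blochX ρ` are the `σ_z`- and `σ_x`-components of the Bloch vector:
`ρ = (𝟙 + blochZ ρ • σ_z + blochX ρ • σ_x + ⋯) / 2` when `ρ` is Hermitian with unit trace. -/
def blochZ (ρ : Mat2) : ℝ := (ρ 0 0).re - (ρ 1 1).re

def blochX (ρ : Mat2) : ℝ := (ρ 0 1).re + (ρ 1 0).re

theorem re_add_re_eq_one {ρ : Mat2} (hρ : IsQubitState ρ) : (ρ 0 0).re + (ρ 1 1).re = 1 := by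
  simpa [trace_fin_two] using congrArg Complex.re hρ.2

theorem blochZ_sq_add_blochX_sq_le_one {ρ : Mat2} (hρ : IsQubitState ρ) :
    blochZ ρ ^ 2 + blochX ρ ^ 2 ≤ 1 := by
  have hpsd := hρ.1
  have h10 : ρ 1 0 = star (ρ 0 1) := (hpsd.isHermitian.apply 1 0).symm
  have h00 : (ρ 0 0).im = 0 := (Complex.le_def.mp hpsd.diag_nonneg).2.symm
  have h11 : (ρ 1 1).im = 0 := (Complex.le_def.mp hpsd.diag_nonneg).2.symm
  have hdet : (ρ 0 1).re ^ 2 + (ρ 0 1).im ^ 2 ≤ (ρ 0 0).re * (ρ 1 1).re := by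
    have := (Complex.le_def.mp hpsd.det_nonneg).1
    simp [det_fin_two, h10, h00, h11] at this
    nlinarith
  simp only [blochZ, blochX, h10, Complex.star_def, Complex.conj_re]
  nlinarith [sq_nonneg (ρ 0 1).im, re_add_re_eq_one hρ]

theorem mul_blochZ_add_mul_blochX_le {ρ : Mat2} (hρ : IsQubitState ρ) (b c : ℝ) :
    b * blochZ ρ + c * blochX ρ ≤ √(b ^ 2 + c ^ 2) := by
  have hball := blochZ_sq_add_blochX_sq_le_one hρ
  have hcs : (b * blochZ ρ + c * blochX ρ) ^ 2 ≤ b ^ 2 + c ^ 2 := by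
    nlinarith [sq_nonneg (b * blochX ρ - c * blochZ ρ), sq_nonneg b, sq_nonneg c]
  exact (le_abs_self _).trans (Real.abs_le_sqrt hcs)

def realPureState (φ : ℝ) : Mat2 := proj ![(Real.cos φ : ℂ), (Real.sin φ : ℂ)]

theorem isQubitState_realPureState (φ : ℝ) : IsQubitState (realPureState φ) := by
  refine ⟨posSemidef_vecMulVec_self_star _, ?_⟩
  simp only [realPureState, proj, trace_fin_two, vecMulVec_apply]
  simp [-Complex.ofReal_cos, -Complex.ofReal_sin, ← sq]
  exact_mod_cast Real.cos_sq_add_sin_sq φ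

theorem blochZ_realPureState (φ : ℝ) : blochZ (realPureState φ) = Real.cos (2 * φ) := by
  simp [-Complex.ofReal_cos, -Complex.ofReal_sin, blochZ, realPureState, proj, vecMulVec_apply,
    Real.cos_two_mul', ← sq, ← Complex.ofReal_pow]

theorem blochX_realPureState (φ : ℝ) : blochX (realPureState φ) = Real.sin (2 * φ) := by
  simp [-Complex.ofReal_cos, -Complex.ofReal_sin, blochX, realPureState, proj, vecMulVec_apply,
    Real.sin_two_mul]
  ring

theorem exists_isQubitState_mul_blochZ_add_mul_blochX_eq (b c : ℝ) :
    ∃ ρ, IsQubitState ρ ∧ b * blochZ ρ + c * blochX ρ = √(b ^ 2 + c ^ 2) := by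
  set w : ℂ := b + c * I
  refine ⟨realPureState (arg w / 2), isQubitState_realPureState _, ?_⟩
  have hcos : ‖w‖ * Real.cos (arg w) = b := (norm_mul_cos_arg w).trans (by simp [w])
  have hsin : ‖w‖ * Real.sin (arg w) = c := (norm_mul_sin_arg w).trans (by simp [w])
  have hnorm : √(b ^ 2 + c ^ 2) = ‖w‖ := (norm_add_mul_I b c).symm
  rw [blochZ_realPureState, blochX_realPureState, mul_div_cancel₀ _ two_ne_zero, hnorm, ← hcos,
    ← hsin]
  linear_combination ‖w‖ * Real.sin_sq_add_cos_sq (arg w)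

theorem isGreatest_image_of_eq_bloch {f : Mat2 → ℝ} {a b c : ℝ}
    (hf : ∀ ρ, IsQubitState ρ → f ρ = a + (b * blochZ ρ + c * blochX ρ)) :
    IsGreatest (f '' {ρ | IsQubitState ρ}) (a + √(b ^ 2 + c ^ 2)) := by
  obtain ⟨ρ, hρ, hmax⟩ := exists_isQubitState_mul_blochZ_add_mul_blochX_eq b c
  refine ⟨⟨ρ, hρ, by rw [hf ρ hρ, hmax]⟩, ?_⟩
  rintro _ ⟨σ, hσ, rfl⟩
  rw [hf σ hσ]
  exact add_le_add le_rfl (mul_blochZ_add_mul_blochX_le hσ b c)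

theorem proj_ket0 : proj ket0 = !![((1 : ℝ) : ℂ), ((0 : ℝ) : ℂ); ((0 : ℝ) : ℂ), ((0 : ℝ) : ℂ)] := by
  ext i j; fin_cases i <;> fin_cases j <;> simp [proj, ket0, vecMulVec_apply]

theorem proj_ket1 : proj ket1 = !![((0 : ℝ) : ℂ), ((0 : ℝ) : ℂ); ((0 : ℝ) : ℂ), ((1 : ℝ) : ℂ)] := by
  ext i j; fin_cases i <;> fin_cases j <;> simp [proj, ket1, vecMulVec_apply]

theorem inv_sqrt_two_mul_inv_sqrt_two : ((√2 : ℝ) : ℂ)⁻¹ * ((√2 : ℝ) : ℂ)⁻¹ = 2⁻¹ := by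
  rw [← mul_inv, ← Complex.ofReal_mul, Real.mul_self_sqrt zero_le_two]
  norm_num

theorem proj_ketP :
    proj ketP = !![((1 / 2 : ℝ) : ℂ), ((1 / 2 : ℝ) : ℂ); ((1 / 2 : ℝ) : ℂ), ((1 / 2 : ℝ) : ℂ)] := by
  ext i j; fin_cases i <;> fin_cases j <;>
    simp [proj, ketP, vecMulVec_apply, inv_sqrt_two_mul_inv_sqrt_two]

theorem proj_ketM :
    proj ketM =
      !![((1 / 2 : ℝ) : ℂ), ((-(1 / 2) : ℝ) : ℂ); ((-(1 / 2) : ℝ) : ℂ), ((1 / 2 : ℝ) : ℂ)] := by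
  ext i j; fin_cases i <;> fin_cases j <;>
    simp [proj, ketM, vecMulVec_apply, inv_sqrt_two_mul_inv_sqrt_two]

theorem Kg_zero_zero (l : ℝ) :
    Kg l 0 0 = !![((√l : ℝ) : ℂ), ((0 : ℝ) : ℂ); ((0 : ℝ) : ℂ), ((√(1 - l) : ℝ) : ℂ)] := by
  ext i j; fin_cases i <;> fin_cases j <;> simp [Kg, bas, proj_ket0, proj_ket1]

theorem Kg_zero_one (l : ℝ) :
    Kg l 0 1 = !![((√(1 - l) : ℝ) : ℂ), ((0 : ℝ) : ℂ); ((0 : ℝ) : ℂ), ((√l : ℝ) : ℂ)] := by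
  ext i j; fin_cases i <;> fin_cases j <;> simp [Kg, bas, proj_ket0, proj_ket1]

theorem Kg_one_zero (l : ℝ) :
    Kg l 1 0 =
      !![(((√l + √(1 - l)) / 2 : ℝ) : ℂ), (((√l - √(1 - l)) / 2 : ℝ) : ℂ);
        (((√l - √(1 - l)) / 2 : ℝ) : ℂ), (((√l + √(1 - l)) / 2 : ℝ) : ℂ)] := by
  ext i j; fin_cases i <;> fin_cases j <;>
    · simp [Kg, bas, proj_ketP, proj_ketM]; ring

theorem Kg_one_one (l : ℝ) :
    Kg l 1 1 =
      !![(((√(1 - l) + √l) / 2 : ℝ) : ℂ), (((√(1 - l) - √l) / 2 : ℝ) : ℂ);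
        (((√(1 - l) - √l) / 2 : ℝ) : ℂ), (((√(1 - l) + √l) / 2 : ℝ) : ℂ)] := by
  ext i j; fin_cases i <;> fin_cases j <;>
    · simp [Kg, bas, proj_ketP, proj_ketM]; ring

theorem re_trace_mul_mul_conjTranspose (k₀₀ k₀₁ k₁₀ k₁₁ : ℝ) (ρ : Mat2) :
    ((!![(k₀₀ : ℂ), k₀₁; k₁₀, k₁₁] * ρ * !![(k₀₀ : ℂ), k₀₁; k₁₀, k₁₁]ᴴ).trace).re =
      (k₀₀ ^ 2 + k₁₀ ^ 2) * (ρ 0 0).re + (k₀₀ * k₀₁ + k₁₀ * k₁₁) * ((ρ 0 1).re + (ρ 1 0).re)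
        + (k₀₁ ^ 2 + k₁₁ ^ 2) * (ρ 1 1).re := by
  simp [trace_fin_two, mul_apply, Fin.sum_univ_two, conjTranspose_apply, vecMul, dotProduct,
    Complex.mul_re]
  ring

theorem re_trace_mul_mul_conjTranspose_mul (k₀₀ k₀₁ k₁₀ k₁₁ c₀₀ c₀₁ c₁₀ c₁₁ : ℝ) (ρ : Mat2) :
    ((!![(k₀₀ : ℂ), k₀₁; k₁₀, k₁₁] * ρ * !![(k₀₀ : ℂ), k₀₁; k₁₀, k₁₁]ᴴ *
        !![(c₀₀ : ℂ), c₀₁; c₁₀, c₁₁]).trace).re =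
      (k₀₀ ^ 2 * c₀₀ + k₀₀ * k₁₀ * (c₀₁ + c₁₀) + k₁₀ ^ 2 * c₁₁) * (ρ 0 0).re
        + (k₀₁ * k₀₀ * c₀₀ + k₀₁ * k₁₀ * c₀₁ + k₁₁ * k₀₀ * c₁₀ + k₁₁ * k₁₀ * c₁₁) * (ρ 0 1).re
        + (k₀₀ * k₀₁ * c₀₀ + k₀₀ * k₁₁ * c₀₁ + k₁₀ * k₀₁ * c₁₀ + k₁₀ * k₁₁ * c₁₁) * (ρ 1 0).re
        + (k₀₁ ^ 2 * c₀₀ + k₀₁ * k₁₁ * (c₀₁ + c₁₀) + k₁₁ ^ 2 * c₁₁) * (ρ 1 1).re := by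
  simp [trace_fin_two, mul_apply, Fin.sum_univ_two, conjTranspose_apply, vecMul, dotProduct,
    Complex.mul_re]
  ring

def score (α l₀ l₁ : ℝ) (x₀ x₁ : Fin 2) (ρ : Mat2) : ℝ :=
  α / 8 * ∑ y : Fin 2,
      ((Kg (if y = 0 then l₀ else l₁) y (sel x₀ x₁ y) * ρ *
          (Kg (if y = 0 then l₀ else l₁) y (sel x₀ x₁ y))ᴴ).trace).re
    + (1 - α) / 16 * ∑ y : Fin 2, ∑ z : Fin 2, ∑ b : Fin 2,
        ((Kg (if y = 0 then l₀ else l₁) y b * ρ *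
            (Kg (if y = 0 then l₀ else l₁) y b)ᴴ * Cm z (sel x₀ x₁ z)).trace).re

theorem successProbability_eq_sum_score (α l₀ l₁ : ℝ) (ρ : Fin 2 → Fin 2 → Mat2) :
    α / 8 * ∑ x₀ : Fin 2, ∑ x₁ : Fin 2, ∑ y : Fin 2,
        ((Kg (if y = 0 then l₀ else l₁) y (sel x₀ x₁ y) * ρ x₀ x₁ *
            (Kg (if y = 0 then l₀ else l₁) y (sel x₀ x₁ y))ᴴ).trace).re
      + (1 - α) / 16 * ∑ x₀ : Fin 2, ∑ x₁ : Fin 2, ∑ y : Fin 2, ∑ z : Fin 2, ∑ b : Fin 2,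
          ((Kg (if y = 0 then l₀ else l₁) y b * ρ x₀ x₁ *
              (Kg (if y = 0 then l₀ else l₁) y b)ᴴ * Cm z (sel x₀ x₁ z)).trace).re
      = ∑ x₀ : Fin 2, ∑ x₁ : Fin 2, score α l₀ l₁ x₀ x₁ (ρ x₀ x₁) := by
  simp only [score, mul_sum, ← sum_add_distrib]

/-- The coefficient `B` of `(-1)^x₀ σ_z` in `Wₓ`, in terms of the Kraus amplitudes `sᵧ = √λᵧ`,
`tᵧ = √(1 - λᵧ)`; swapping the two instruments gives the coefficient `C` of `(-1)^x₁ σ_x`. -/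
def zCoeff (α s₀ t₀ s₁ t₁ : ℝ) : ℝ :=
  α * (s₀ ^ 2 - t₀ ^ 2) / 16 + (1 - α) * (s₀ ^ 2 + t₀ ^ 2 + 2 * s₁ * t₁) / 32

theorem score_eq (α l₀ l₁ : ℝ) (x₀ x₁ : Fin 2) (ρ : Mat2) :
    score α l₀ l₁ x₀ x₁ ρ =
      (√l₀ ^ 2 + √(1 - l₀) ^ 2 + √l₁ ^ 2 + √(1 - l₁) ^ 2) / 16 * ((ρ 0 0).re + (ρ 1 1).re)
        + (-1) ^ (x₀ : ℕ) * zCoeff α √l₀ √(1 - l₀) √l₁ √(1 - l₁) * blochZ ρ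
        + (-1) ^ (x₁ : ℕ) * zCoeff α √l₁ √(1 - l₁) √l₀ √(1 - l₀) * blochX ρ := by
  fin_cases x₀ <;> fin_cases x₁ <;>
  · simp only [score, Cm, sel, bas, Fin.sum_univ_two, Fin.mk_zero, Fin.mk_one, Fin.reduceEq,
      reduceIte]
    simp only [Kg_zero_zero, Kg_zero_one, Kg_one_zero, Kg_one_one, proj_ket0, proj_ket1,
      proj_ketP, proj_ketM, re_trace_mul_mul_conjTranspose, re_trace_mul_mul_conjTranspose_mul]
    simp only [zCoeff, blochZ, blochX]
    ring

theorem score_eq_of_isQubitState {α l₀ l₁ : ℝ} (hl₀ : l₀ ∈ Set.Icc 0 1) (hl₁ : l₁ ∈ Set.Icc 0 1)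
    (x₀ x₁ : Fin 2) {ρ : Mat2} (hρ : IsQubitState ρ) :
    score α l₀ l₁ x₀ x₁ ρ =
      1 / 8 + ((-1) ^ (x₀ : ℕ) * zCoeff α √l₀ √(1 - l₀) √l₁ √(1 - l₁) * blochZ ρ
        + (-1) ^ (x₁ : ℕ) * zCoeff α √l₁ √(1 - l₁) √l₀ √(1 - l₀) * blochX ρ) := by
  rw [score_eq, re_add_re_eq_one hρ, Real.sq_sqrt hl₀.1, Real.sq_sqrt (sub_nonneg.2 hl₀.2),
    Real.sq_sqrt hl₁.1, Real.sq_sqrt (sub_nonneg.2 hl₁.2)]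
  ring

theorem sqrt_add_Ffun_eq {α l₀ l₁ : ℝ} (hl₀ : l₀ ∈ Set.Icc 0 1) (hl₁ : l₁ ∈ Set.Icc 0 1) :
    √((1 - 3 * α) ^ 2 / 2 + Ffun α l₀ l₁) =
      16 * √(zCoeff α √l₀ √(1 - l₀) √l₁ √(1 - l₁) ^ 2
        + zCoeff α √l₁ √(1 - l₁) √l₀ √(1 - l₀) ^ 2) := by
  have hs₀ := Real.sq_sqrt hl₀.1
  have ht₀ := Real.sq_sqrt (sub_nonneg.2 hl₀.2)
  have hs₁ := Real.sq_sqrt hl₁.1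
  have ht₁ := Real.sq_sqrt (sub_nonneg.2 hl₁.2)
  have h : (1 - 3 * α) ^ 2 / 2 + Ffun α l₀ l₁ =
      16 ^ 2 * (zCoeff α √l₀ √(1 - l₀) √l₁ √(1 - l₁) ^ 2
        + zCoeff α √l₁ √(1 - l₁) √l₀ √(1 - l₀) ^ 2) := by
    rw [Ffun, zCoeff, zCoeff, Real.sqrt_mul hl₀.1, Real.sqrt_mul hl₁.1, hs₀, ht₀, hs₁, ht₁]
    linear_combination (-(1 - α) ^ 2) *
      (√(1 - l₀) ^ 2 * hs₀ + l₀ * ht₀ + √(1 - l₁) ^ 2 * hs₁ + l₁ * ht₁)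
  rw [h, Real.sqrt_mul (by positivity), Real.sqrt_sq (by norm_num)]

end PrepareTransformMeasure

open PrepareTransformMeasure Finset in
theorem success_probability_given_sharpness_general
    (α : ℝ)
    (l₀ l₁ : ℝ) (hl₀ : l₀ ∈ Set.Icc (1 / 2 : ℝ) 1) (hl₁ : l₁ ∈ Set.Icc (1 / 2 : ℝ) 1) :
    IsGreatest
      {r : ℝ | ∃ ρ : Fin 2 → Fin 2 → Mat2, (∀ x₀ x₁, IsQubitState (ρ x₀ x₁)) ∧
        α / 8 * ∑ x₀ : Fin 2, ∑ x₁ : Fin 2, ∑ y : Fin 2,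
            ((Kg (if y = 0 then l₀ else l₁) y (sel x₀ x₁ y) * ρ x₀ x₁ *
                (Kg (if y = 0 then l₀ else l₁) y (sel x₀ x₁ y))ᴴ).trace).re
          + (1 - α) / 16 * ∑ x₀ : Fin 2, ∑ x₁ : Fin 2, ∑ y : Fin 2, ∑ z : Fin 2, ∑ b : Fin 2,
              ((Kg (if y = 0 then l₀ else l₁) y b * ρ x₀ x₁ *
                  (Kg (if y = 0 then l₀ else l₁) y b)ᴴ * Cm z (sel x₀ x₁ z)).trace).re
          = r}
      (1 / 2 + Real.sqrt ((1 - 3 * α) ^ 2 / 2 + Ffun α l₀ l₁) / 4) := by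
  have hl₀' : l₀ ∈ Set.Icc 0 1 := Set.Icc_subset_Icc (by norm_num) le_rfl hl₀
  have hl₁' : l₁ ∈ Set.Icc 0 1 := Set.Icc_subset_Icc (by norm_num) le_rfl hl₁
  set S := √(zCoeff α √l₀ √(1 - l₀) √l₁ √(1 - l₁) ^ 2
    + zCoeff α √l₁ √(1 - l₁) √l₀ √(1 - l₀) ^ 2)
  have hscore (x₀ x₁ : Fin 2) :
      IsGreatest (score α l₀ l₁ x₀ x₁ '' {ρ | IsQubitState ρ}) (1 / 8 + S) := by
    simpa [mul_pow, ← pow_mul] using isGreatest_image_of_eq_bloch fun ρ hρ ↦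
      score_eq_of_isQubitState (α := α) hl₀' hl₁' x₀ x₁ hρ
  choose ρ hρ hρ_score using fun x₀ x₁ ↦ (hscore x₀ x₁).1
  rw [sqrt_add_Ffun_eq hl₀' hl₁']
  refine ⟨⟨ρ, hρ, ?_⟩, ?_⟩
  · rw [successProbability_eq_sum_score]
    simp only [hρ_score, Fin.sum_univ_two]
    ring
  · rintro _ ⟨σ, hσ, rfl⟩
    rw [successProbability_eq_sum_score]
    calc _ ≤ ∑ _x₀ : Fin 2, ∑ _x₁ : Fin 2, (1 / 8 + S) :=
          sum_le_sum fun x₀ _ ↦ sum_le_sum fun x₁ _ ↦ (hscore x₀ x₁).2 ⟨σ x₀ x₁, hσ x₀ x₁, rfl⟩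
      _ = _ := by simp only [Fin.sum_univ_two]; ring

/-- Eq. (C2) of the paper: with Bob's Lüders instruments of sharpnesses `λ₀, λ₁` and
Charlie's fixed measurements, the maximum over Alice's preparations of the average
success probability equals `1/2 + √((1−3α)²/2 + F(λ₀,λ₁))/4`. -/
theorem success_probability_given_sharpness
    (α : ℝ) (hα : α ∈ Set.Icc (0 : ℝ) 1)
    (l₀ l₁ : ℝ) (hl₀ : l₀ ∈ Set.Icc (1 / 2 : ℝ) 1) (hl₁ : l₁ ∈ Set.Icc (1 / 2 : ℝ) 1) :
    IsGreatest
      {r : ℝ | ∃ ρ : Fin 2 → Fin 2 → Mat2, (∀ x₀ x₁, IsQubitState (ρ x₀ x₁)) ∧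
        α / 8 * ∑ x₀ : Fin 2, ∑ x₁ : Fin 2, ∑ y : Fin 2,
            ((Kg (if y = 0 then l₀ else l₁) y (sel x₀ x₁ y) * ρ x₀ x₁ *
                (Kg (if y = 0 then l₀ else l₁) y (sel x₀ x₁ y))ᴴ).trace).re
          + (1 - α) / 16 * ∑ x₀ : Fin 2, ∑ x₁ : Fin 2, ∑ y : Fin 2, ∑ z : Fin 2, ∑ b : Fin 2,
              ((Kg (if y = 0 then l₀ else l₁) y b * ρ x₀ x₁ *
                  (Kg (if y = 0 then l₀ else l₁) y b)ᴴ * Cm z (sel x₀ x₁ z)).trace).re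
          = r}
      (1 / 2 + Real.sqrt ((1 - 3 * α) ^ 2 / 2 + Ffun α l₀ l₁) / 4) :=
  success_probability_given_sharpness_general α l₀ l₁ hl₀ hl₁
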